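/- Weak duality for the Tikhonov functional: let x* ∈ ∂J(x†) and let J*(p) := sup_{x ∈ X} (p(x) − J(x)) denote the Fenchel conjugate of J. Then for every α > 0, every z ∈ H with J*(A* z) < ∞, and every minimizer x_α of T_α, (1/α)(T_α(x†) − T_α(x_α)) ≤ J*(A* z) − J*(x*) − (A* z − x*)(x†) + (α/2)‖z‖². In particular, if Ψ₅ is an index function such that for every α > 0 there exists z ∈ H with J*(A* z) − J*(x*) − (A* z − x*)(x†) + (α/2)‖z‖² ≤ Ψ₅(α), then (1/α)(T_α(x†) − T_α(x_α)) ≤ Ψ₅(α) for all α > 0 (Theorem 1, implication (e) ⇒ (b)). -/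

import Mathlib

/-! Since `x* ∈ ∂J(x†)`, the supremum defining `J*(x*)` is attained at `x†`, so
`J*(x*) = x*(x†) − J(x†)`. With the Fenchel–Young inequality `⟪z, A x⟫ − J x ≤ J*(A*z)`,
valid for any `x`, the claimed bound reduces to the completed square
`0 ≤ ‖A x − A x† + α z‖²`. -/

def IsIndexFun (Ψ : ℝ → ℝ) : Prop :=
  MonotoneOn Ψ (Set.Ioi 0) ∧ (∀ t > 0, 0 ≤ Ψ t) ∧
    Filter.Tendsto Ψ (nhdsWithin 0 (Set.Ioi 0)) (nhds 0)

open Set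

section Conjugate

variable {X : Type*} [NormedAddCommGroup X] [NormedSpace ℝ X]

/-- `sSup` of an empty or unbounded set is `0` in `ℝ`: only meaningful when the range
is bounded above. -/
noncomputable def fenchelConjugate (J : X → ℝ) (p : X →L[ℝ] ℝ) : ℝ :=
  sSup (range fun x => p x - J x)

theorem le_fenchelConjugate {J : X → ℝ} {p : X →L[ℝ] ℝ}
    (hp : BddAbove (range fun x => p x - J x)) (x : X) :
    p x - J x ≤ fenchelConjugate J p :=
  le_csSup hp ⟨x, rfl⟩

theorem fenchelConjugate_eq_of_subgradient {J : X → ℝ} {p : X →L[ℝ] ℝ} {x₀ : X}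
    (hp : ∀ x, J x₀ + p (x - x₀) ≤ J x) :
    fenchelConjugate J p = p x₀ - J x₀ := by
  refine IsGreatest.csSup_eq ⟨⟨x₀, rfl⟩, ?_⟩
  rintro _ ⟨x, rfl⟩
  linarith [hp x, map_sub p x x₀]

end Conjugate

section Tikhonov

variable {X H : Type*} [NormedAddCommGroup X] [NormedSpace ℝ X]
  [NormedAddCommGroup H] [InnerProductSpace ℝ H]

noncomputable def tikhonov (A : X →L[ℝ] H) (y : H) (J : X → ℝ) (α : ℝ) (x : X) : ℝ :=
  (1 / 2) * ‖A x - y‖ ^ 2 + α * J x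

theorem neg_mul_inner_le_half_norm_sq (u z : H) (α : ℝ) :
    -(α * inner ℝ z u) ≤ (1 / 2) * ‖u‖ ^ 2 + (α ^ 2 / 2) * ‖z‖ ^ 2 := by
  have hsq : ‖u + α • z‖ ^ 2 = ‖u‖ ^ 2 + 2 * (α * inner ℝ z u) + α ^ 2 * ‖z‖ ^ 2 := by
    rw [norm_add_sq_real, real_inner_smul_right, real_inner_comm, norm_smul, mul_pow,
      Real.norm_eq_abs, sq_abs]
  nlinarith [sq_nonneg ‖u + α • z‖]

theorem tikhonov_weak_duality (A : X →L[ℝ] H) (J : X → ℝ) (xdag : X)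
    (p : X →L[ℝ] ℝ) (hp : ∀ x, J xdag + p (x - xdag) ≤ J x)
    {α : ℝ} (hα : 0 < α) (z : H)
    (hz : BddAbove (range fun x => (innerSL ℝ z).comp A x - J x)) (x : X) :
    (1 / α) * (tikhonov A (A xdag) J α xdag - tikhonov A (A xdag) J α x) ≤
      fenchelConjugate J ((innerSL ℝ z).comp A) - fenchelConjugate J p
        - ((innerSL ℝ z).comp A - p) xdag + (α / 2) * ‖z‖ ^ 2 := by
  have young := le_fenchelConjugate hz x
  have square := neg_mul_inner_le_half_norm_sq (A x - A xdag) z α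
  simp only [ContinuousLinearMap.comp_apply, innerSL_apply_apply] at young
  simp only [tikhonov, fenchelConjugate_eq_of_subgradient hp, sub_apply,
    ContinuousLinearMap.comp_apply, innerSL_apply_apply, sub_self, norm_zero]
  rw [inner_sub_right] at square
  rw [one_div_mul_eq_div, div_le_iff₀ hα]
  nlinarith [mul_le_mul_of_nonneg_left young hα.le]

end Tikhonov

theorem stmt6_general {X H : Type*} [NormedAddCommGroup X] [NormedSpace ℝ X]
    [NormedAddCommGroup H] [InnerProductSpace ℝ H]
    (A : X →L[ℝ] H) (J : X → ℝ) (xdag : X)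
    (T : ℝ → X → ℝ)
    (hT : ∀ α x, T α x = (1 / 2) * ‖A x - A xdag‖ ^ 2 + α * J x)
    (xstar : X →L[ℝ] ℝ) (hxstar : ∀ z : X, J xdag + xstar (z - xdag) ≤ J z)
    (Astar : H → X →L[ℝ] ℝ) (hAstar : ∀ v x, Astar v x = (inner ℝ v (A x) : ℝ))
    (Jstar : (X →L[ℝ] ℝ) → ℝ)
    (hJstar : ∀ p, Jstar p = sSup (Set.range fun x => p x - J x)) :
    (∀ α > 0, ∀ z : H, BddAbove (Set.range fun x => Astar z x - J x) →
      ∀ xa : X, (∀ x, T α xa ≤ T α x) →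
        (1 / α) * (T α xdag - T α xa) ≤
          Jstar (Astar z) - Jstar xstar - (Astar z - xstar) xdag + (α / 2) * ‖z‖ ^ 2) ∧
      (∀ Ψ₅ : ℝ → ℝ, IsIndexFun Ψ₅ →
        (∀ α > 0, ∃ z : H, BddAbove (Set.range fun x => Astar z x - J x) ∧
          Jstar (Astar z) - Jstar xstar - (Astar z - xstar) xdag + (α / 2) * ‖z‖ ^ 2 ≤
            Ψ₅ α) →
        ∀ α > 0, ∀ xa : X, (∀ x, T α xa ≤ T α x) →
          (1 / α) * (T α xdag - T α xa) ≤ Ψ₅ α) := by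
  obtain rfl : T = tikhonov A (A xdag) J := funext₂ hT
  obtain rfl : Astar = fun z => (innerSL ℝ z).comp A :=
    funext fun z => ContinuousLinearMap.ext (hAstar z)
  obtain rfl : Jstar = fenchelConjugate J := funext hJstar
  have duality := fun α (hα : 0 < α) z hz xa =>
    tikhonov_weak_duality A J xdag xstar hxstar hα z hz xa
  refine ⟨fun α hα z hz xa _ => duality α hα z hz xa, ?_⟩
  intro Ψ₅ _ hdual α hα xa _
  obtain ⟨z, hz, hle⟩ := hdual α hα
  exact (duality α hα z hz xa).trans hle

/-- Theorem 1, (e) ⇒ (b): weak duality for the Tikhonov functional. With `x* ∈ ∂J(x†)`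
and the Fenchel conjugate `J*(p) = sup_x (p(x) − J(x))`, for every `α > 0`, every `z ∈ H`
with `J*(A*z) < ∞` (i.e. the defining supremum is bounded above) and every minimizer `x_α`
of `T_α` one has
`(1/α)(T_α(x†) − T_α(x_α)) ≤ J*(A*z) − J*(x*) − (A*z − x*)(x†) + (α/2)‖z‖²`.
In particular a dual `T`-rate `Ψ₅` is a `T`-rate. -/
theorem stmt6 {X H : Type*} [NormedAddCommGroup X] [NormedSpace ℝ X] [CompleteSpace X]
    [NormedAddCommGroup H] [InnerProductSpace ℝ H] [CompleteSpace H]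
    (A : X →L[ℝ] H) (J : X → ℝ) (hJ : ConvexOn ℝ Set.univ J) (xdag : X)
    (T : ℝ → X → ℝ)
    (hT : ∀ α x, T α x = (1 / 2) * ‖A x - A xdag‖ ^ 2 + α * J x)
    (xstar : X →L[ℝ] ℝ) (hxstar : ∀ z : X, J xdag + xstar (z - xdag) ≤ J z)
    (Astar : H → X →L[ℝ] ℝ) (hAstar : ∀ v x, Astar v x = (inner ℝ v (A x) : ℝ))
    (Jstar : (X →L[ℝ] ℝ) → ℝ)
    (hJstar : ∀ p, Jstar p = sSup (Set.range fun x => p x - J x)) :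
    (∀ α > 0, ∀ z : H, BddAbove (Set.range fun x => Astar z x - J x) →
      ∀ xa : X, (∀ x, T α xa ≤ T α x) →
        (1 / α) * (T α xdag - T α xa) ≤
          Jstar (Astar z) - Jstar xstar - (Astar z - xstar) xdag + (α / 2) * ‖z‖ ^ 2) ∧
      (∀ Ψ₅ : ℝ → ℝ, IsIndexFun Ψ₅ →
        (∀ α > 0, ∃ z : H, BddAbove (Set.range fun x => Astar z x - J x) ∧
          Jstar (Astar z) - Jstar xstar - (Astar z - xstar) xdag + (α / 2) * ‖z‖ ^ 2 ≤
            Ψ₅ α) →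
        ∀ α > 0, ∀ xa : X, (∀ x, T α xa ≤ T α x) →
          (1 / α) * (T α xdag - T α xa) ≤ Ψ₅ α) :=
  stmt6_general A J xdag T hT xstar hxstar Astar hAstar Jstar hJstar
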